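/- Let g = log p for a Gaussian mixture p on ℝᵐ with common covariance Σ, and suppose the correction matrix G(z) = H_g(z) + Σ⁻¹ satisfies 0 ≤ xᵀG(z)x ≤ c‖x‖² for all x, z. Let {z^l, w_s^l} (l = 0,…,2m) be the unscented sigma points of N(μ_j, Σ) with parameter λ > 0. Then the sigma-point approximation Ĥ_j = Σ_l w_s^l g(z^l) satisfies Ĥ_j = g(μ_j) − m/2 + φ with |φ| ≤ c m σ²_max / 2, where σ²_max is the maximal eigenvalue of Σ. -/

import Mathlib

open Matrix MeasureTheory

/-- Density of the multivariate Gaussian `N(μ, S)` on `ℝᵐ`. -/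
noncomputable def gaussPdf {m : ℕ} (μ : Fin m → ℝ) (S : Matrix (Fin m) (Fin m) ℝ)
    (z : Fin m → ℝ) : ℝ :=
  (Real.sqrt ((2 * Real.pi) ^ m * S.det))⁻¹ *
    Real.exp (-(1 / 2) * ((z - μ) ⬝ᵥ (S⁻¹ *ᵥ (z - μ))))

open scoped ComplexOrder in
/-- The positive semidefinite square root of a positive semidefinite matrix
(as defined in Mathlib of December 2024, since removed). -/
noncomputable def Matrix.PosSemidef.sqrt {n 𝕜 : Type*} [Fintype n] [DecidableEq n] [RCLike 𝕜]
    {A : Matrix n n 𝕜} (hA : A.PosSemidef) : Matrix n n 𝕜 :=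
  (hA.1.eigenvectorUnitary : Matrix n n 𝕜) *
    diagonal ((RCLike.ofReal : ℝ → 𝕜) ∘ Real.sqrt ∘ hA.1.eigenvalues) *
    (star hA.1.eigenvectorUnitary : Matrix n n 𝕜)

/-!
Write `φᵢ` for the columns of `√((λ+m)Σ)`. The lower bound on `G` makes
`t ↦ g(μ + tφᵢ) + t²/2 · φᵢᵀΣ⁻¹φᵢ` convex and the upper bound makes
`t ↦ g(μ + tφᵢ) + t²/2 · (φᵢᵀΣ⁻¹φᵢ - c‖φᵢ‖²)` concave. Comparing `t = ±1` with `t = 0`, and using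
`φᵢᵀΣ⁻¹φᵢ = λ + m` and `‖φᵢ‖² ≤ (λ + m)σ²_max`, the second difference
`g(μ + φᵢ) + g(μ - φᵢ) - 2g(μ)` lies between `-(λ + m)` and `-(λ + m) + c(λ + m)σ²_max`.
Averaging with the sigma-point weights turns the `-(λ + m)` into `-m/2` and leaves an error in
`[0, c m σ²_max / 2]`.
-/

open scoped ComplexOrder in
lemma Matrix.PosSemidef.sqrt_mul_self {n 𝕜 : Type*} [Fintype n] [DecidableEq n] [RCLike 𝕜]
    {A : Matrix n n 𝕜} (hA : A.PosSemidef) : hA.sqrt * hA.sqrt = A := by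
  conv_rhs => rw [hA.1.spectral_theorem, Unitary.conjStarAlgAut_apply]
  simp only [Matrix.PosSemidef.sqrt, Matrix.mul_assoc,
    ← Matrix.mul_assoc _ (hA.1.eigenvectorUnitary : Matrix n n 𝕜), Unitary.coe_star_mul_self,
    Matrix.one_mul, ← Matrix.mul_assoc (diagonal _), diagonal_mul_diagonal]
  congr 3
  ext i
  simp [← RCLike.ofReal_mul, Real.mul_self_sqrt (hA.eigenvalues_nonneg i)]

open scoped ComplexOrder in
lemma Matrix.PosSemidef.conjTranspose_sqrt {n 𝕜 : Type*} [Fintype n] [DecidableEq n] [RCLike 𝕜]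
    {A : Matrix n n 𝕜} (hA : A.PosSemidef) : hA.sqrtᴴ = hA.sqrt := by
  rw [Matrix.PosSemidef.sqrt, conjTranspose_mul, conjTranspose_mul, diagonal_conjTranspose,
    ← star_eq_conjTranspose, ← star_eq_conjTranspose, star_star, Matrix.mul_assoc]
  congr 3
  ext i
  simp

lemma Matrix.transpose_mul_mul_apply_self {n R : Type*} [Fintype n] [CommSemiring R]
    (B A : Matrix n n R) (i : n) :
    (Bᵀ * A * B) i i = (fun k => B k i) ⬝ᵥ (A *ᵥ fun k => B k i) := by
  rw [Matrix.mul_assoc]; rfl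

lemma Matrix.mul_inv_mul_of_mul_self_eq_smul {n K : Type*} [Fintype n] [DecidableEq n] [Field K]
    {R S : Matrix n n K} {t : K} (ht : t ≠ 0) (hS : IsUnit S.det) (hR : R * R = t • S) :
    R * S⁻¹ * R = t • 1 := by
  have hRS : Commute R S := by
    refine smul_right_injective _ ht ?_
    change t • (R * S) = t • (S * R)
    rw [← Matrix.mul_smul, ← Matrix.smul_mul, ← hR, Matrix.mul_assoc]
  have hRSinv : Commute R S⁻¹ := hRS.units_inv_right (u := S.nonsingInvUnit hS)
  rw [hRSinv.eq, Matrix.mul_assoc, hR, Matrix.mul_smul, nonsing_inv_mul _ hS]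

section SigmaColumns

variable {n : Type*} [Fintype n] [DecidableEq n] {S : Matrix n n ℝ} {t : ℝ}

lemma Matrix.PosSemidef.sqrt_col_dotProduct_inv_mulVec (hS : IsUnit S.det) (ht : t ≠ 0)
    (hP : (t • S).PosSemidef) (i : n) :
    (fun k => hP.sqrt k i) ⬝ᵥ (S⁻¹ *ᵥ fun k => hP.sqrt k i) = t := by
  rw [← transpose_mul_mul_apply_self, ← conjTranspose_eq_transpose_of_trivial,
    hP.conjTranspose_sqrt, mul_inv_mul_of_mul_self_eq_smul ht hS hP.sqrt_mul_self]
  simp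

lemma Matrix.PosSemidef.sqrt_col_dotProduct_self (hP : (t • S).PosSemidef) (i : n) :
    (fun k => hP.sqrt k i) ⬝ᵥ (fun k => hP.sqrt k i) = t * S i i := by
  have h := transpose_mul_mul_apply_self hP.sqrt 1 i
  rw [← conjTranspose_eq_transpose_of_trivial, hP.conjTranspose_sqrt, Matrix.mul_one,
    hP.sqrt_mul_self, one_mulVec] at h
  simpa using h.symm

end SigmaColumns

lemma Matrix.diag_le_of_dotProduct_mulVec_le {n : Type*} [Fintype n] [DecidableEq n]
    {S : Matrix n n ℝ} {σ : ℝ} (hσ : ∀ x : n → ℝ, x ⬝ᵥ (S *ᵥ x) ≤ σ * (x ⬝ᵥ x)) (i : n) :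
    S i i ≤ σ := by
  simpa using hσ (Pi.single i 1)

section SecondDifference

variable {E : Type*} [NormedAddCommGroup E] [NormedSpace ℝ E]

lemma HasFDerivAt.hasDerivAt_comp_add_smul {F : Type*} [NormedAddCommGroup F] [NormedSpace ℝ F]
    {f : E → F} {f' : E →L[ℝ] F} {x v : E} {t : ℝ} (hf : HasFDerivAt f f' (x + t • v)) :
    HasDerivAt (fun s : ℝ => f (x + s • v)) (f' v) t := by
  have hline : HasDerivAt (fun s : ℝ => x + s • v) v t := by
    simpa using ((hasDerivAt_id t).smul_const v).const_add x
  exact hf.comp_hasDerivAt t hline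

lemma convexOn_comp_add_smul_add_sq {g : E → ℝ} (hg : ContDiff ℝ 2 g) (x v : E) {a : ℝ}
    (ha : ∀ z, -a ≤ iteratedFDeriv ℝ 2 g z ![v, v]) :
    ConvexOn ℝ Set.univ (fun t : ℝ => g (x + t • v) + a / 2 * t ^ 2) := by
  have hg1 : Differentiable ℝ g := hg.differentiable (by norm_num)
  have hg2 : Differentiable ℝ (fderiv ℝ g) :=
    (hg.fderiv_right (m := 1) (by norm_num)).differentiable (by norm_num)
  have hd1 : ∀ t : ℝ, HasDerivAt (fun t => g (x + t • v) + a / 2 * t ^ 2)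
      (fderiv ℝ g (x + t • v) v + a * t) t := fun t => by
    refine ((hg1 (x + t • v)).hasFDerivAt.hasDerivAt_comp_add_smul.add
      ((hasDerivAt_pow 2 t).const_mul (a / 2))).congr_deriv ?_
    push_cast
    ring
  have hd2 : ∀ t : ℝ, HasDerivAt (fun t => fderiv ℝ g (x + t • v) v + a * t)
      (fderiv ℝ (fderiv ℝ g) (x + t • v) v v + a) t := fun t =>
    (((hg2 (x + t • v)).hasFDerivAt.hasDerivAt_comp_add_smul.clm_apply
      (hasDerivAt_const t v)).add ((hasDerivAt_id t).const_mul a)).congr_deriv (by simp)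
  refine convexOn_of_hasDerivWithinAt2_nonneg convex_univ
    (fun t _ => (hd1 t).continuousAt.continuousWithinAt) (fun t _ => (hd1 t).hasDerivWithinAt)
    (fun t _ => (hd2 t).hasDerivWithinAt) fun t _ => ?_
  have := ha (x + t • v)
  simp only [iteratedFDeriv_two_apply, Matrix.cons_val_zero, Matrix.cons_val_one] at this
  linarith

lemma two_mul_le_add_add_of_neg_le_iteratedFDeriv_two {g : E → ℝ} (hg : ContDiff ℝ 2 g)
    (x v : E) {a : ℝ} (ha : ∀ z, -a ≤ iteratedFDeriv ℝ 2 g z ![v, v]) :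
    2 * g x ≤ g (x + v) + g (x - v) + a := by
  have := (convexOn_comp_add_smul_add_sq hg x v ha).2 (Set.mem_univ 1) (Set.mem_univ (-1))
    (by norm_num : (0 : ℝ) ≤ 1 / 2) (by norm_num : (0 : ℝ) ≤ 1 / 2) (by norm_num)
  norm_num [← sub_eq_add_neg] at this
  linarith

lemma add_add_le_of_iteratedFDeriv_two_le {g : E → ℝ} (hg : ContDiff ℝ 2 g)
    (x v : E) {b : ℝ} (hb : ∀ z, iteratedFDeriv ℝ 2 g z ![v, v] ≤ b) :
    g (x + v) + g (x - v) ≤ 2 * g x + b := by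
  have := two_mul_le_add_add_of_neg_le_iteratedFDeriv_two (g := -g) hg.neg x v (a := b)
    fun z => by simpa [iteratedFDeriv_neg_apply] using hb z
  simp only [Pi.neg_apply] at this
  linarith

end SecondDifference

lemma gaussPdf_pos {m : ℕ} (μ : Fin m → ℝ) {S : Matrix (Fin m) (Fin m) ℝ} (hS : 0 < S.det)
    (z : Fin m → ℝ) : 0 < gaussPdf μ S z := by
  unfold gaussPdf
  have : 0 < (2 * Real.pi) ^ m * S.det := by positivity
  positivity

lemma contDiff_gaussPdf {m : ℕ} (μ : Fin m → ℝ) (S : Matrix (Fin m) (Fin m) ℝ)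
    {n : WithTop ℕ∞} : ContDiff ℝ n (gaussPdf μ S) := by
  unfold gaussPdf
  simp only [dotProduct, mulVec]
  fun_prop

lemma contDiff_log_gaussMixture {ι : Type*} [Fintype ι] [Nonempty ι] {m : ℕ} {w : ι → ℝ}
    (hw : ∀ i, 0 < w i) (μs : ι → Fin m → ℝ) {S : Matrix (Fin m) (Fin m) ℝ} (hS : 0 < S.det)
    {n : WithTop ℕ∞} :
    ContDiff ℝ n fun z => Real.log (∑ i, w i * gaussPdf (μs i) S z) :=
  (ContDiff.sum fun _ _ => contDiff_const.mul (contDiff_gaussPdf _ _)).log fun z =>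
    (Finset.sum_pos (fun i _ => mul_pos (hw i) (gaussPdf_pos _ hS z)) Finset.univ_nonempty).ne'

/-- The sigma-point average of `f`, given `y₀ = f μ`, `yp i = f (μ + φᵢ)` and
`ym i = f (μ - φᵢ)`. -/
noncomputable def unscentedAverage {m : ℕ} (l y₀ : ℝ) (yp ym : Fin m → ℝ) : ℝ :=
  l / (l + m) * y₀ + ∑ i, 1 / (2 * (l + m)) * (yp i + ym i)

lemma unscentedAverage_sub_eq_sum {m : ℕ} {l y₀ : ℝ} (yp ym : Fin m → ℝ) (ht : l + m ≠ 0) :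
    unscentedAverage l y₀ yp ym - (y₀ - m / 2) =
      ∑ i, (yp i + ym i - 2 * y₀ + (l + m)) / (2 * (l + m)) := by
  have hsplit : ∑ i, (yp i + ym i - 2 * y₀ + (l + m)) / (2 * (l + m)) =
      ∑ i, 1 / (2 * (l + m)) * (yp i + ym i) + ∑ _i : Fin m, (l + m - 2 * y₀) / (2 * (l + m)) := by
    rw [← Finset.sum_add_distrib]
    congr with i
    field_simp
    ring
  rw [unscentedAverage, hsplit, Finset.sum_const, Finset.card_univ, Fintype.card_fin, nsmul_eq_mul]
  field_simp
  ring

lemma abs_unscentedAverage_sub_le {m : ℕ} {l y₀ C : ℝ} {yp ym : Fin m → ℝ} (ht : 0 < l + m)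
    (hy : ∀ i, 2 * y₀ - (l + m) ≤ yp i + ym i ∧
      yp i + ym i ≤ 2 * y₀ - (l + m) + C * (l + m)) :
    |unscentedAverage l y₀ yp ym - (y₀ - m / 2)| ≤ C * m / 2 := by
  rw [unscentedAverage_sub_eq_sum yp ym ht.ne']
  calc |∑ i, (yp i + ym i - 2 * y₀ + (l + m)) / (2 * (l + m))|
      = ∑ i, (yp i + ym i - 2 * y₀ + (l + m)) / (2 * (l + m)) :=
        abs_of_nonneg <| Finset.sum_nonneg fun i _ =>
          div_nonneg (by linarith [hy i]) (by positivity)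
    _ ≤ ∑ _i : Fin m, C * (l + m) / (2 * (l + m)) :=
        Finset.sum_le_sum fun i _ => div_le_div_of_nonneg_right (by linarith [hy i]) (by positivity)
    _ = C * m / 2 := by
        simp only [Finset.sum_const, Finset.card_univ, Fintype.card_fin, nsmul_eq_mul]
        field_simp

open Real in
/-- Let `g = log p` for a Gaussian mixture `p` on `ℝᵐ` with common
covariance `Σ`, and suppose the correction matrix `G(z) = H_g(z) + Σ⁻¹` has quadratic form
satisfying `0 ≤ xᵀG(z)x ≤ c‖x‖²` for all `x, z`. Let `{z^l, w_s^l}` (`l = 0,…,2m`) be the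
unscented sigma points of `N(μ_j, Σ)` with parameter `λ > 0`, i.e. `z^0 = μ_j` with weight
`λ/(λ+m)` and `z^l = μ_j ± φ_i` (columns `φ_i` of `√((λ+m)Σ)`) with weights `1/(2(λ+m))`.
Then `Ĥ_j = Σ_l w_s^l g(z^l)` satisfies `Ĥ_j = g(μ_j) − m/2 + φ` with
`|φ| ≤ c m σ²_max / 2`, `σ²_max` being an upper bound on the eigenvalues of `Σ`
(in particular the maximal eigenvalue). -/
theorem sigma_point_component_approx {m N : ℕ} (w : Fin N → ℝ) (μs : Fin N → Fin m → ℝ)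
    (S : Matrix (Fin m) (Fin m) ℝ) (hw : ∀ i, 0 < w i) (hsum : ∑ i, w i = 1)
    (hS : S.PosDef)
    (p : (Fin m → ℝ) → ℝ) (hp : p = fun z => ∑ i, w i * gaussPdf (μs i) S z)
    (g : (Fin m → ℝ) → ℝ) (hg : g = fun z => Real.log (p z))
    (c σmax l : ℝ) (hl : 0 < l)
    (hσ : ∀ x : Fin m → ℝ, x ⬝ᵥ (S *ᵥ x) ≤ σmax * (x ⬝ᵥ x))
    (hG : ∀ (z x : Fin m → ℝ),
      0 ≤ iteratedFDeriv ℝ 2 g z ![x, x] + x ⬝ᵥ (S⁻¹ *ᵥ x) ∧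
        iteratedFDeriv ℝ 2 g z ![x, x] + x ⬝ᵥ (S⁻¹ *ᵥ x) ≤ c * (x ⬝ᵥ x))
    (hP : ((l + m) • S).PosSemidef) (μj : Fin m → ℝ)
    (Hhat : ℝ)
    (hHhat : Hhat = l / (l + m) * g μj +
      ∑ i : Fin m, (1 / (2 * (l + m))) *
        (g (μj + fun k => hP.sqrt k i) + g (μj - fun k => hP.sqrt k i))) :
    ∃ e : ℝ, Hhat = g μj - m / 2 + e ∧ |e| ≤ c * m * σmax / 2 := by
  have : Nonempty (Fin N) :=
    Finset.univ_nonempty_iff.mp (Finset.nonempty_of_sum_ne_zero (hsum ▸ one_ne_zero))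
  have hg2 : ContDiff ℝ 2 g := hg ▸ hp ▸ contDiff_log_gaussMixture hw μs hS.det_pos
  have ht : (0 : ℝ) < l + m := by positivity
  set φ : Fin m → Fin m → ℝ := fun i k => hP.sqrt k i
  have hφS i : φ i ⬝ᵥ (S⁻¹ *ᵥ φ i) = l + m :=
    hP.sqrt_col_dotProduct_inv_mulVec hS.det_pos.ne'.isUnit ht.ne' i
  have hφφ i : c * (φ i ⬝ᵥ φ i) ≤ c * σmax * (l + m) := by
    have hc : 0 ≤ c := by simpa using (hG 0 (Pi.single i 1)).1.trans (hG 0 (Pi.single i 1)).2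
    rw [hP.sqrt_col_dotProduct_self, mul_assoc, mul_comm σmax]
    exact mul_le_mul_of_nonneg_left
      (mul_le_mul_of_nonneg_left (diag_le_of_dotProduct_mulVec_le hσ i) ht.le) hc
  have hbound : |unscentedAverage l (g μj) (fun i => g (μj + φ i)) (fun i => g (μj - φ i)) -
      (g μj - m / 2)| ≤ c * σmax * m / 2 := by
    refine abs_unscentedAverage_sub_le ht fun i => ⟨?_, ?_⟩
    · linarith [two_mul_le_add_add_of_neg_le_iteratedFDeriv_two hg2 μj (φ i) (a := l + m)
        fun z => by linarith [(hG z (φ i)).1, hφS i]]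
    · linarith [add_add_le_of_iteratedFDeriv_two_le hg2 μj (φ i)
        (b := c * σmax * (l + m) - (l + m)) fun z => by linarith [(hG z (φ i)).2, hφS i, hφφ i]]
  refine ⟨Hhat - (g μj - m / 2), by ring, ?_⟩
  rw [hHhat, mul_right_comm c]
  exact hbound
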